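/- arXiv:math/0008057 — 4 statements merged into one kernel-verified Lean document; each statement's English description precedes it below -/
import Mathlib

section
/- Let Ω be a subset of the open unit disk D containing a point w₀ and at least one other point, and define S : Ω → ℂ by S(w₀) = 1 and S(z) = 0 for z ∈ Ω \ {w₀}. Then the Schur kernel K_S has exactly one negative square on Ω; that is, for every finite list of points z₁,…,z_m ∈ Ω the Hermitian m×m matrix (K_S(z_j,z_i))_{i,j=1}^m has at most one negative eigenvalue (counted with multiplicity), and for some finite list of points in Ω this matrix has exactly one negative eigenvalue. -/
open scoped Matrix ComplexConjugate

/-- The number of negative eigenvalues (with multiplicity) of a Hermitian complex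
matrix; junk value `0` if the matrix is not Hermitian. -/
noncomputable def negEig {n : Type*} [Fintype n] [DecidableEq n]
    (A : Matrix n n ℂ) : ℕ :=
  if h : A.IsHermitian then Nat.card {i // h.eigenvalues i < 0} else 0

/-- The number of positive eigenvalues (with multiplicity) of a Hermitian complex
matrix; junk value `0` if the matrix is not Hermitian. -/
noncomputable def posEig {n : Type*} [Fintype n] [DecidableEq n]
    (A : Matrix n n ℂ) : ℕ :=
  if h : A.IsHermitian then Nat.card {i // 0 < h.eigenvalues i} else 0

/-- The Schur kernel `K_S(w,z) = (1 - S(z) conj(S(w)))/(1 - z conj(w))`. -/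
noncomputable def schurKer (S : ℂ → ℂ) (w z : ℂ) : ℂ :=
  (1 - S z * conj (S w)) / (1 - z * conj w)

/-- A Hermitian kernel `K` has exactly `κ` negative squares on `Ω`. -/
def HasNegSquares (Ω : Set ℂ) (K : ℂ → ℂ → ℂ) (κ : ℕ) : Prop :=
  (∀ (m : ℕ) (z : Fin m → ℂ), (∀ i, z i ∈ Ω) →
      negEig (Matrix.of fun i j => K (z j) (z i)) ≤ κ) ∧
  (∃ (m : ℕ) (z : Fin m → ℂ), (∀ i, z i ∈ Ω) ∧
      negEig (Matrix.of fun i j => K (z j) (z i)) = κ)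

/-- The `r×r` lower triangular Toeplitz matrix built from `a₀, a₁, …`. -/
def Tmat (a : ℕ → ℂ) (r : ℕ) : Matrix (Fin r) (Fin r) ℂ :=
  Matrix.of fun i j => if (j : ℕ) ≤ i then a ((i : ℕ) - j) else 0

/-- The `r×r` lower triangular Toeplitz matrix built from `conj a₀, conj a₁, …`. -/
def Ttil (a : ℕ → ℂ) (r : ℕ) : Matrix (Fin r) (Fin r) ℂ :=
  Matrix.of fun i j => if (j : ℕ) ≤ i then conj (a ((i : ℕ) - j)) else 0

/-- The `r×r` Hankel matrix with entries `a_{i+j+1}`. -/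
def Qmat (a : ℕ → ℂ) (r : ℕ) : Matrix (Fin r) (Fin r) ℂ :=
  Matrix.of fun i j => a ((i : ℕ) + j + 1)

/-- The `m×m` lower triangular Toeplitz matrix built from `c₀, c₁, …`. -/
def Bmat (c : ℕ → ℂ) (m : ℕ) : Matrix (Fin m) (Fin m) ℂ :=
  Matrix.of fun i j => if (j : ℕ) ≤ i then c ((i : ℕ) - j) else 0

/-- The `m×m` lower triangular Toeplitz matrix built from `conj c₀, conj c₁, …`. -/
def Btil (c : ℕ → ℂ) (m : ℕ) : Matrix (Fin m) (Fin m) ℂ :=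
  Matrix.of fun i j => if (j : ℕ) ≤ i then conj (c ((i : ℕ) - j)) else 0

/-- The `m×m` Hermitian Toeplitz matrix built from `c₀, c₁, …`
(`M_r` of the paper has size `r+1`, i.e. it is `Mmat c (r+1)`). -/
def Mmat (c : ℕ → ℂ) (m : ℕ) : Matrix (Fin m) (Fin m) ℂ :=
  Matrix.of fun i j =>
    if (j : ℕ) ≤ i then c ((i : ℕ) - j) else conj (c ((j : ℕ) - i))

/-- The `m×m` flip matrix, with ones on the antidiagonal. -/
def Jmat (m : ℕ) : Matrix (Fin m) (Fin m) ℂ :=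
  Matrix.of fun i j => if (i : ℕ) + j + 1 = m then 1 else 0

/-- Identification of `Fin m` with `Fin p ⊕ Fin q` when `m = p + q`. -/
def splitAt {p q m : ℕ} (h : m = p + q) : Fin m → Fin p ⊕ Fin q :=
  fun i =>
    if h' : (i : ℕ) < p then Sum.inl ⟨i, h'⟩
    else Sum.inr ⟨(i : ℕ) - p, by have := i.isLt; omega⟩

/-- The `m×m` block diagonal matrix `diag(A, D)` with `A` of size `p` and `D` of
size `q`, where `m = p + q`. -/
def dblock {p q m : ℕ} (h : m = p + q)
    (A : Matrix (Fin p) (Fin p) ℂ) (D : Matrix (Fin q) (Fin q) ℂ) :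
    Matrix (Fin m) (Fin m) ℂ :=
  (Matrix.fromBlocks A 0 0 D).submatrix (splitAt h) (splitAt h)

/-- The sequence `c` belongs to the class `P_ν`: `ν(M_r) = ν` for all
sufficiently large `r`. -/
def memP (c : ℕ → ℂ) (ν : ℕ) : Prop :=
  ∃ N, ∀ r ≥ N, negEig (Mmat c (r + 1)) = ν

/-- The sequence `c` belongs to the class `P_{ν,π}`: `ν(M_r) = ν` and
`π(M_r) = π` for all sufficiently large `r`. -/
def memPP (c : ℕ → ℂ) (ν π : ℕ) : Prop :=
  ∃ N, ∀ r ≥ N, negEig (Mmat c (r + 1)) = ν ∧ posEig (Mmat c (r + 1)) = π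

/-!
On `Ω` the kernel `K_S` is the Szegő kernel `(1 - z conj w)⁻¹`, which is positive semidefinite
(expand it as a geometric series and its quadratic form becomes a sum of squares), minus the
rank-one kernel `S z conj (S w) / (1 - |w₀|²)`. A positive semidefinite matrix minus a rank-one
matrix has a nonnegative form on a hyperplane, and a hyperplane meets the plane spanned by any
two eigenvectors with negative eigenvalues, so there is at most one of them. At the two points
`w₀, z₁` the matrix has a zero entry at `(w₀, w₀)` and nonzero off-diagonal entries, hence a
negative determinant and exactly one negative eigenvalue.
-/

open Matrix
open scoped ComplexOrder

section SzegoKernel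

variable {ι : Type*} [Fintype ι]

lemma norm_mul_conj_lt_one {a b : ℂ} (ha : ‖a‖ < 1) (hb : ‖b‖ < 1) : ‖a * conj b‖ < 1 := by
  rw [norm_mul, RCLike.norm_conj]
  nlinarith [norm_nonneg a, norm_nonneg b]

lemma one_sub_mul_conj_ne_zero {a b : ℂ} (ha : ‖a‖ < 1) (hb : ‖b‖ < 1) : 1 - a * conj b ≠ 0 :=
  sub_ne_zero.mpr fun h => by simpa [← h] using norm_mul_conj_lt_one ha hb

lemma hasSum_dotProduct_szegoKernel_mulVec {z : ι → ℂ} (hz : ∀ i, ‖z i‖ < 1) (x : ι → ℂ) :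
    HasSum (fun n : ℕ => star (∑ j, x j * conj (z j) ^ n) * ∑ j, x j * conj (z j) ^ n)
      (star x ⬝ᵥ (Matrix.of (fun i j => (1 - z i * conj (z j))⁻¹) *ᵥ x)) := by
  have hgeom : ∀ i j, HasSum (fun n : ℕ => z i ^ n * conj (z j) ^ n) (1 - z i * conj (z j))⁻¹ :=
    fun i j => by
      simpa [mul_pow] using hasSum_geometric_of_norm_lt_one (norm_mul_conj_lt_one (hz i) (hz j))
  have hterm : ∀ i j, HasSum (fun n : ℕ => star (x i) * z i ^ n * (x j * conj (z j) ^ n))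
      (star (x i) * ((1 - z i * conj (z j))⁻¹ * x j)) := fun i j =>
    (((hgeom i j).mul_right (x j)).mul_left (star (x i))).congr_fun fun n => by ring
  convert hasSum_sum (s := Finset.univ) fun i _ =>
    hasSum_sum (s := Finset.univ) fun j _ => hterm i j using 1
  · ext n
    simp only [star_sum, star_mul', RCLike.star_def, map_pow, Complex.conj_conj,
      Finset.sum_mul_sum, mul_comm (conj (x _))]
  · simp only [dotProduct, mulVec, of_apply, Pi.star_apply, Finset.mul_sum]

lemma posSemidef_szegoKernel {z : ι → ℂ} (hz : ∀ i, ‖z i‖ < 1) :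
    (Matrix.of fun i j => (1 - z i * conj (z j))⁻¹).PosSemidef := by
  refine .of_dotProduct_mulVec_nonneg (IsHermitian.ext fun i j => ?_) fun x =>
    (hasSum_dotProduct_szegoKernel_mulVec hz x).nonneg fun n => star_mul_self_nonneg _
  simp [mul_comm]

end SzegoKernel

namespace Matrix.IsHermitian

variable {𝕜 : Type*} [RCLike 𝕜] {n : Type*} [Fintype n] [DecidableEq n]
  {A : Matrix n n 𝕜}

lemma star_eigenvectorBasis_dotProduct (hA : A.IsHermitian) (i j : n) :
    star ⇑(hA.eigenvectorBasis i) ⬝ᵥ ⇑(hA.eigenvectorBasis j) = if i = j then 1 else 0 := by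
  rw [← orthonormal_iff_ite.mp hA.eigenvectorBasis.orthonormal i j,
    EuclideanSpace.inner_eq_star_dotProduct, dotProduct_comm]

lemma re_dotProduct_mulVec_eigenvector_combination (hA : A.IsHermitian) {i j : n} (hij : i ≠ j)
    (a b : 𝕜) :
    let x := a • ⇑(hA.eigenvectorBasis i) + b • ⇑(hA.eigenvectorBasis j)
    RCLike.re (star x ⬝ᵥ (A *ᵥ x)) = ‖a‖ ^ 2 * hA.eigenvalues i + ‖b‖ ^ 2 * hA.eigenvalues j := by
  intro x
  simp only [x, mulVec_add, mulVec_smul, mulVec_eigenvectorBasis, star_add, star_smul,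
    add_dotProduct, dotProduct_add, smul_dotProduct, dotProduct_smul,
    star_eigenvectorBasis_dotProduct, hij, hij.symm, if_true, if_false]
  simp [RCLike.mul_conj, RCLike.smul_re, mul_comm]

lemma card_neg_eigenvalues_le_one (hA : A.IsHermitian) (v : n → 𝕜)
    (h : ∀ x, star v ⬝ᵥ x = 0 → 0 ≤ RCLike.re (star x ⬝ᵥ (A *ᵥ x))) :
    Nat.card {i // hA.eigenvalues i < 0} ≤ 1 := by
  by_contra! hcard
  obtain ⟨⟨i, hi⟩, ⟨j, hj⟩, hij⟩ := (Finite.one_lt_card_iff_nontrivial.mp hcard).exists_pair_ne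
  replace hij : i ≠ j := fun h => hij (Subtype.ext h)
  set u : n → n → 𝕜 := fun k => ⇑(hA.eigenvectorBasis k)
  by_cases hvi : star v ⬝ᵥ u i = 0
  · exact (h _ hvi).not_gt (hA.eigenvalues_eq i ▸ hi)
  have horth : star v ⬝ᵥ ((star v ⬝ᵥ u j) • u i + (-(star v ⬝ᵥ u i)) • u j) = 0 := by
    simp only [dotProduct_add, dotProduct_smul, smul_eq_mul]
    ring
  have hform := h _ horth
  rw [re_dotProduct_mulVec_eigenvector_combination hA hij] at hform
  have hnorm : 0 < ‖-(star v ⬝ᵥ u i)‖ ^ 2 := pow_pos (norm_pos_iff.mpr (neg_ne_zero.mpr hvi)) 2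
  nlinarith

end Matrix.IsHermitian

lemma negEig_sub_vecMulVec_le_one {n : Type*} [Fintype n] [DecidableEq n]
    {P : Matrix n n ℂ} (hP : P.PosSemidef) (u v : n → ℂ) :
    negEig (P - vecMulVec u (star v)) ≤ 1 := by
  unfold negEig
  split_ifs with hA
  · refine hA.card_neg_eigenvalues_le_one v fun x hx => ?_
    rw [sub_mulVec, vecMulVec_mulVec, hx]
    simpa using (Complex.nonneg_iff.mp (hP.dotProduct_mulVec_nonneg x)).1
  · exact zero_le_one

lemma conj_schurKer (S : ℂ → ℂ) (w z : ℂ) : conj (schurKer S w z) = schurKer S z w := by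
  simp [schurKer, mul_comm]

lemma isHermitian_schurKer {ι : Type*} (S : ℂ → ℂ) (z : ι → ℂ) :
    (Matrix.of fun i j => schurKer S (z j) (z i)).IsHermitian :=
  IsHermitian.ext fun i j => by simp [conj_schurKer]

section PointMass

variable {Ω : Set ℂ} {w₀ : ℂ} {S : ℂ → ℂ}

/-- `S z * conj (S w)` vanishes unless `z = w = w₀`, so the denominator of the second term may be
frozen at `w₀`, which makes that term a rank-one kernel. -/
lemma schurKer_eq_sub_of_eq_zero_off (hS0 : ∀ z ∈ Ω, z ≠ w₀ → S z = 0) {w z : ℂ}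
    (hw : w ∈ Ω) (hz : z ∈ Ω) :
    schurKer S w z = (1 - z * conj w)⁻¹ - S z * conj (S w) / (1 - w₀ * conj w₀) := by
  rw [schurKer, sub_div, one_div]
  by_cases hzw : z = w₀ ∧ w = w₀
  · rw [hzw.1, hzw.2]
  · have : S z * conj (S w) = 0 := by
      rcases not_and_or.mp hzw with h | h
      · rw [hS0 z hz h, zero_mul]
      · rw [hS0 w hw h, map_zero, mul_zero]
    simp [this]

lemma negEig_schurKer_le_one (hΩ : Ω ⊆ Metric.ball 0 1) (hS0 : ∀ z ∈ Ω, z ≠ w₀ → S z = 0)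
    {m : ℕ} {z : Fin m → ℂ} (hz : ∀ i, z i ∈ Ω) :
    negEig (Matrix.of fun i j => schurKer S (z j) (z i)) ≤ 1 := by
  have hdecomp : (Matrix.of fun i j => schurKer S (z j) (z i)) =
      Matrix.of (fun i j => (1 - z i * conj (z j))⁻¹) -
        vecMulVec (fun i => S (z i) / (1 - w₀ * conj w₀)) (star fun i => S (z i)) := by
    ext i j
    simp [schurKer_eq_sub_of_eq_zero_off hS0 (hz j) (hz i), vecMulVec_apply, div_mul_eq_mul_div]
  rw [hdecomp]
  exact negEig_sub_vecMulVec_le_one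
    (posSemidef_szegoKernel fun i => mem_ball_zero_iff.mp (hΩ (hz i))) _ _

end PointMass

lemma negEig_eq_one_of_re_det_neg {A : Matrix (Fin 2) (Fin 2) ℂ} (hA : A.IsHermitian)
    (hdet : A.det.re < 0) : negEig A = 1 := by
  have hprod : hA.eigenvalues 0 * hA.eigenvalues 1 < 0 := by
    simpa [hA.det_eq_prod_eigenvalues, Fin.prod_univ_two] using hdet
  rw [negEig, dif_pos hA, Nat.card_eq_one_iff_exists]
  rcases mul_neg_iff.mp hprod with ⟨h0, h1⟩ | ⟨h0, h1⟩
  · exact ⟨⟨1, h1⟩, fun ⟨i, hi⟩ => by fin_cases i; exacts [absurd hi h0.not_gt, rfl]⟩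
  · exact ⟨⟨0, h0⟩, fun ⟨i, hi⟩ => by fin_cases i; exacts [rfl, absurd hi h1.not_gt]⟩

/-- the two-point-value function `S` (equal to `1` at `w₀` and `0`
elsewhere on `Ω`) has a Schur kernel with exactly one negative square on `Ω`. -/
theorem schur_kernel_of_indicator_has_one_negative_square
    (Ω : Set ℂ) (hΩ : Ω ⊆ Metric.ball (0 : ℂ) 1)
    (w₀ : ℂ) (hw₀ : w₀ ∈ Ω) (hne : ∃ z ∈ Ω, z ≠ w₀)
    (S : ℂ → ℂ) (hS1 : S w₀ = 1) (hS0 : ∀ z ∈ Ω, z ≠ w₀ → S z = 0) :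
    HasNegSquares Ω (schurKer S) 1 := by
  refine ⟨fun m z hz => negEig_schurKer_le_one hΩ hS0 hz, ?_⟩
  obtain ⟨z₁, hz₁, hz₁w₀⟩ := hne
  refine ⟨2, ![w₀, z₁], fun i => by fin_cases i <;> assumption, ?_⟩
  have hK₀₀ : schurKer S w₀ w₀ = 0 := by simp [schurKer, hS1]
  have hK₁₀ : schurKer S z₁ w₀ ≠ 0 := by
    rw [schurKer, hS1, hS0 z₁ hz₁ hz₁w₀]
    simpa using one_sub_mul_conj_ne_zero (mem_ball_zero_iff.mp (hΩ hw₀))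
      (mem_ball_zero_iff.mp (hΩ hz₁))
  refine negEig_eq_one_of_re_det_neg (isHermitian_schurKer S _) ?_
  simp [det_fin_two, hK₀₀, ← conj_schurKer S z₁ w₀, Complex.mul_conj, Complex.normSq_pos.mpr hK₁₀]
end

section
/- Let a₀, a₁, a₂, … be complex numbers and define c₀ = 1 and c_k = Σ_{j=0}^{k−1} c_j a_{k−1−j} for k ≥ 1. Then for every r ≥ 1: M_r = B_r · diag(1, I_r − T_r T_r*) · B_r* and M_r = B_r* · diag(I_r − T_r* T_r, 1) · B_r, where diag(1, A) denotes the (r+1)×(r+1) block-diagonal matrix with scalar entry 1 in the top-left corner and the r×r block A in the bottom-right, and diag(A, 1) the one with A in the top-left and 1 in the bottom-right corner. -/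
open scoped Matrix ComplexConjugate

/-! The recursion for `c` says that `B = lowerToeplitz c` inverts `1 - L`, where `L` is the lower
triangular Toeplitz matrix of `0, a₀, a₁, …`; thus `B L = L B = B - 1`, since Toeplitz matrices
commute. Hence `B (1 - L L*) B* = B B* - (B - 1)(B - 1)* = B + B* - 1 = M`, and in the same way
`B* (1 - L* L) B = M`. Finally `L` is `T` moved one row down, so `1 - L L* = diag(1, 1 - T T*)` and
`1 - L* L = diag(1 - T* T, 1)`. -/

open Finset Matrix

section LowerToeplitz

variable {R : Type*}

def lowerToeplitz [Zero R] (x : ℕ → R) (m : ℕ) : Matrix (Fin m) (Fin m) R :=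
  Matrix.of fun i j => if (j : ℕ) ≤ i then x ((i : ℕ) - j) else 0

theorem Bmat_eq_lowerToeplitz (c : ℕ → ℂ) (m : ℕ) : Bmat c m = lowerToeplitz c m := rfl

theorem Tmat_eq_lowerToeplitz (a : ℕ → ℂ) (r : ℕ) : Tmat a r = lowerToeplitz a r := rfl

theorem lowerToeplitz_single_zero [Zero R] [One R] (m : ℕ) :
    lowerToeplitz (Pi.single 0 (1 : R)) m = 1 := by
  ext i j
  simp only [lowerToeplitz, of_apply, one_apply, Pi.single_apply, Fin.ext_iff]
  split_ifs <;> first | rfl | omega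

theorem lowerToeplitz_sub [AddGroup R] (x y : ℕ → R) (m : ℕ) :
    lowerToeplitz (x - y) m = lowerToeplitz x m - lowerToeplitz y m := by
  ext i j
  by_cases h : j ≤ i <;> simp [lowerToeplitz, h]

theorem lowerToeplitz_mul [Semiring R] (x y : ℕ → R) (m : ℕ) :
    lowerToeplitz x m * lowerToeplitz y m =
      lowerToeplitz (fun k => ∑ t ∈ range (k + 1), x t * y (k - t)) m := by
  ext i j
  set g : ℕ → R := fun l =>
    (if l ≤ i then x ((i : ℕ) - l) else 0) * (if (j : ℕ) ≤ l then y (l - j) else 0)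
  have hi := i.isLt
  calc (lowerToeplitz x m * lowerToeplitz y m) i j = ∑ l ∈ range m, g l :=
        Fin.sum_univ_eq_sum_range g m
    _ = ∑ l ∈ range (i + 1), g l :=
        (sum_subset (range_subset_range.2 hi) fun l _ hl => by
          simp only [mem_range] at hl; simp [g, show ¬ l ≤ i by omega]).symm
    _ = ∑ t ∈ range (i + 1), if (j : ℕ) ≤ i - t then x t * y (i - t - j) else 0 := by
        rw [← sum_range_reflect]
        refine sum_congr rfl fun t ht => ?_
        rw [mem_range] at ht
        simp only [g, show (i : ℕ) + 1 - 1 - t = i - t by omega,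
          Nat.sub_sub_self (Nat.lt_succ_iff.mp ht), Nat.sub_le, if_true, mul_ite, mul_zero]
    _ = _ := by
        simp only [lowerToeplitz, of_apply]
        split_ifs with hji
        · rw [← sum_subset (range_subset_range.2 (show (i : ℕ) - j + 1 ≤ i + 1 by omega))]
          · refine sum_congr rfl fun t ht => ?_
            rw [mem_range] at ht
            rw [if_pos (by omega), show (i : ℕ) - t - j = i - j - t by omega]
          · intro t ht' ht
            rw [mem_range] at ht ht'
            exact if_neg (by omega)
        · exact sum_eq_zero fun t _ => if_neg (by omega)

theorem lowerToeplitz_mul_comm [CommSemiring R] (x y : ℕ → R) (m : ℕ) :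
    lowerToeplitz x m * lowerToeplitz y m = lowerToeplitz y m * lowerToeplitz x m := by
  rw [lowerToeplitz_mul, lowerToeplitz_mul]
  congr 1
  funext k
  rw [← sum_range_reflect]
  refine sum_congr rfl fun t ht => ?_
  rw [mem_range] at ht
  rw [mul_comm, show k + 1 - 1 - t = k - t by omega, Nat.sub_sub_self (by omega)]

def consZero [Zero R] (a : ℕ → R) : ℕ → R
  | 0 => 0
  | k + 1 => a k

theorem lowerToeplitz_mul_lowerToeplitz_consZero [Ring R] {a c : ℕ → R} (hc0 : c 0 = 1)
    (hc : ∀ k : ℕ, c (k + 1) = ∑ j ∈ range (k + 1), c j * a (k - j)) (m : ℕ) :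
    lowerToeplitz c m * lowerToeplitz (consZero a) m = lowerToeplitz c m - 1 := by
  rw [lowerToeplitz_mul, ← lowerToeplitz_single_zero, ← lowerToeplitz_sub]
  congr 1
  funext k
  rcases k with _ | k
  · simp [hc0, consZero]
  · rw [sum_range_succ, Nat.sub_self, Pi.sub_apply, Pi.single_eq_of_ne k.succ_ne_zero, hc k]
    simp only [consZero, mul_zero, add_zero, sub_zero]
    refine sum_congr rfl fun t ht => ?_
    rw [mem_range] at ht
    rw [show k + 1 - t = k - t + 1 by omega]

end LowerToeplitz

theorem Mmat_eq_lowerToeplitz_add_conjTranspose_sub_one {c : ℕ → ℂ} (hc0 : c 0 = 1) (m : ℕ) :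
    Mmat c m = lowerToeplitz c m + (lowerToeplitz c m)ᴴ - 1 := by
  ext i j
  rcases lt_trichotomy i j with h | rfl | h
  · simp [Mmat, lowerToeplitz, one_apply, h.ne, h.not_ge, h.le]
  · simp [Mmat, lowerToeplitz, hc0]
  · simp [Mmat, lowerToeplitz, one_apply, h.ne', h.not_ge, h.le]

section Star

variable {R : Type*} [Ring R] [StarRing R]

theorem mul_one_sub_mul_star_mul_star {B L : R} (h : B * L = B - 1) :
    B * (1 - L * star L) * star B = B + star B - 1 :=
  calc B * (1 - L * star L) * star B = B * star B - B * L * star (B * L) := by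
        rw [star_mul]; noncomm_ring
    _ = B + star B - 1 := by rw [h, star_sub, star_one]; noncomm_ring

theorem star_mul_one_sub_star_mul_mul {B L : R} (h : L * B = B - 1) :
    star B * (1 - star L * L) * B = B + star B - 1 := by
  simpa only [star_star, add_comm] using mul_one_sub_mul_star_mul_star (B := star B) (L := star L)
    (by rw [← star_mul, h, star_sub, star_one])

theorem one_sub_submatrix_mul_conjTranspose {k l n o : Type*} [Fintype n] [Fintype o]
    [DecidableEq k] [DecidableEq l] (F : Matrix l n R) (e₁ : k ≃ l) (e₂ : o ≃ n) :
    1 - F.submatrix e₁ e₂ * (F.submatrix e₁ e₂)ᴴ = (1 - F * Fᴴ).submatrix e₁ e₁ := by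
  rw [conjTranspose_submatrix, submatrix_mul_equiv, ← submatrix_one_equiv e₁]
  rfl

theorem one_sub_conjTranspose_submatrix_mul {k l n o : Type*} [Fintype k] [Fintype l]
    [DecidableEq n] [DecidableEq o] (F : Matrix l n R) (e₁ : k ≃ l) (e₂ : o ≃ n) :
    1 - (F.submatrix e₁ e₂)ᴴ * F.submatrix e₁ e₂ = (1 - Fᴴ * F).submatrix e₂ e₂ := by
  rw [conjTranspose_submatrix, submatrix_mul_equiv, ← submatrix_one_equiv e₂]
  rfl

end Star

theorem splitAt_eq {p q m : ℕ} (h : m = p + q) :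
    splitAt h = ⇑((finCongr h).trans finSumFinEquiv.symm) := by
  funext i
  by_cases hi : (i : ℕ) < p
  · have : finCongr h i = Fin.castAdd q ⟨i, hi⟩ := rfl
    rw [Equiv.trans_apply, this, finSumFinEquiv_symm_apply_castAdd, splitAt, dif_pos hi]
  · have : finCongr h i = Fin.natAdd p ⟨i - p, by omega⟩ := Fin.ext (by simp; omega)
    rw [Equiv.trans_apply, this, finSumFinEquiv_symm_apply_natAdd, splitAt, dif_neg hi]

/-- `T` moved one row down and padded with a zero first row and a zero last column. -/
def shiftDown {R : Type*} [Zero R] {r : ℕ} (T : Matrix (Fin r) (Fin r) R) :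
    Matrix (Fin (r + 1)) (Fin (r + 1)) R :=
  (fromBlocks 0 0 T 0 : Matrix (Fin 1 ⊕ Fin r) (Fin r ⊕ Fin 1) R).submatrix
    (splitAt (add_comm r 1)) (splitAt rfl)

theorem lowerToeplitz_consZero {R : Type*} [Zero R] (a : ℕ → R) (r : ℕ) :
    lowerToeplitz (consZero a) (r + 1) = shiftDown (lowerToeplitz a r) := by
  ext i j
  simp only [lowerToeplitz, shiftDown, of_apply, submatrix_apply, splitAt]
  rcases Nat.lt_or_ge j i with hji | hij
  · obtain ⟨d, hd⟩ : ∃ d, (i : ℕ) - j = d + 1 := ⟨(i : ℕ) - j - 1, by omega⟩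
    have hi : ¬ (i : ℕ) < 1 := by omega
    have hj : (j : ℕ) < r := by omega
    simp [hji.le, hd, hi, hj, show (j : ℕ) ≤ i - 1 by omega, show (i : ℕ) - 1 - j = d by omega,
      consZero]
  · have hz : consZero a (i - j) = 0 := by rw [show (i : ℕ) - j = 0 by omega]; rfl
    split_ifs <;> simp [hz] <;> omega

theorem one_sub_shiftDown_mul_conjTranspose {r : ℕ} (T : Matrix (Fin r) (Fin r) ℂ)
    (h : r + 1 = 1 + r) :
    1 - shiftDown T * (shiftDown T)ᴴ = dblock h 1 (1 - T * Tᴴ) := by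
  rw [shiftDown, dblock, splitAt_eq, splitAt_eq, one_sub_submatrix_mul_conjTranspose]
  congr 1
  rw [fromBlocks_conjTranspose, fromBlocks_multiply, ← fromBlocks_one, sub_eq_add_neg,
    fromBlocks_neg, fromBlocks_add]
  simp [sub_eq_add_neg]

theorem one_sub_conjTranspose_shiftDown_mul {r : ℕ} (T : Matrix (Fin r) (Fin r) ℂ)
    (h : r + 1 = r + 1) :
    1 - (shiftDown T)ᴴ * shiftDown T = dblock h (1 - Tᴴ * T) 1 := by
  rw [shiftDown, dblock, splitAt_eq, splitAt_eq, one_sub_conjTranspose_submatrix_mul]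
  congr 1
  rw [fromBlocks_conjTranspose, fromBlocks_multiply, ← fromBlocks_one, sub_eq_add_neg,
    fromBlocks_neg, fromBlocks_add]
  simp [sub_eq_add_neg]

/-- `M_r = B_r diag(1, I_r - T_r T_r*) B_r*`
and `M_r = B_r* diag(I_r - T_r* T_r, 1) B_r`. -/
theorem Mmat_eq_Bmat_dblock_mul
    (a c : ℕ → ℂ) (hc0 : c 0 = 1)
    (hc : ∀ k : ℕ, c (k + 1) = ∑ j ∈ Finset.range (k + 1), c j * a (k - j))
    (r : ℕ) :
    Mmat c (r + 1) =
        Bmat c (r + 1) *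
          dblock (by omega) (1 : Matrix (Fin 1) (Fin 1) ℂ)
            (1 - Tmat a r * (Tmat a r)ᴴ) *
          (Bmat c (r + 1))ᴴ ∧
      Mmat c (r + 1) =
        (Bmat c (r + 1))ᴴ *
          dblock (by omega) (1 - (Tmat a r)ᴴ * Tmat a r)
            (1 : Matrix (Fin 1) (Fin 1) ℂ) *
          Bmat c (r + 1) := by
  have hBL := lowerToeplitz_mul_lowerToeplitz_consZero hc0 hc (r + 1)
  have hLB := lowerToeplitz_mul_comm c (consZero a) (r + 1) ▸ hBL
  rw [lowerToeplitz_consZero] at hBL hLB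
  rw [Bmat_eq_lowerToeplitz, Tmat_eq_lowerToeplitz, ← one_sub_shiftDown_mul_conjTranspose,
    ← one_sub_conjTranspose_shiftDown_mul, Mmat_eq_lowerToeplitz_add_conjTranspose_sub_one hc0]
  exact ⟨(mul_one_sub_mul_star_mul_star hBL).symm, (star_mul_one_sub_star_mul_mul hLB).symm⟩
end

section
/- Let a₀, a₁, a₂, … be complex numbers such that for some nonnegative integer κ the Hermitian matrices I_j − T_j T_j* have exactly κ negative eigenvalues for all sufficiently large j. Then there exists δ > 0 such that the power series Σ_{j=0}^∞ a_j z^j converges for all complex z with |z| < δ. -/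
open scoped Matrix ComplexConjugate

/-!
`I - T_j T_j*` has at most `κ` negative eigenvalues, so its principal submatrix on the last
`κ + 1` indices is not negative definite: some `y ≠ 0` supported there has
`‖T_j* y‖ ≤ ‖y‖`. Read on those rows, this bounds the coefficients of degree `< j` of `w(z) · Σ a_j z^j`, where `w` is the
polynomial with coefficients `conj y`. Normalising `w` and passing to a limit on the unit sphere
gives one `w ≠ 0` for which all coefficients of the product are bounded. If `t` is the lowest
degree of `w`, the coefficient of degree `n + t` determines `a_n w_t` up to this bounded number
and a combination of `a_0, …, a_{n-1}`, so `|a_n|` grows at most geometrically.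
-/

open Matrix Finset
open scoped ComplexOrder

/-- The coefficient of `z ^ m` in `(∑ₛ w s zˢ) * (∑ⱼ a j zʲ)`. -/
def convCoeff (a : ℕ → ℂ) {k : ℕ} (w : Fin k → ℂ) (m : ℕ) : ℂ :=
  ∑ s : Fin k, w s * if (s : ℕ) ≤ m then a (m - s) else 0

lemma star_dotProduct_self_eq_sum_norm_sq {n : Type*} [Fintype n] (v : n → ℂ) :
    star v ⬝ᵥ v = ((∑ i, ‖v i‖ ^ 2 : ℝ) : ℂ) := by
  simp [dotProduct, Complex.conj_mul']

namespace Matrix.IsHermitian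

variable {n m : Type*} [Fintype n] [DecidableEq n] [Fintype m] {A : Matrix n n ℂ}

lemma star_dotProduct_mulVec_eq_sum (hA : A.IsHermitian) (x : n → ℂ) :
    star x ⬝ᵥ (A *ᵥ x) = ∑ i, (hA.eigenvalues i : ℂ) *
      (star ((star (hA.eigenvectorUnitary : Matrix n n ℂ) *ᵥ x) i) *
        (star (hA.eigenvectorUnitary : Matrix n n ℂ) *ᵥ x) i) := by
  conv_lhs => rw [hA.spectral_theorem, Unitary.conjStarAlgAut_apply]
  rw [← mulVec_mulVec, ← mulVec_mulVec, dotProduct_mulVec]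
  have : star x ᵥ* (hA.eigenvectorUnitary : Matrix n n ℂ) =
      star (star (hA.eigenvectorUnitary : Matrix n n ℂ) *ᵥ x) := by
    rw [star_mulVec, star_eq_conjTranspose, conjTranspose_conjTranspose]
  rw [this]
  simp [dotProduct, mulVec_diagonal, mul_left_comm]

lemma star_dotProduct_mulVec_nonneg_of_coord_eq_zero (hA : A.IsHermitian) (x : n → ℂ)
    (hx : ∀ i, hA.eigenvalues i < 0 →
      (star (hA.eigenvectorUnitary : Matrix n n ℂ) *ᵥ x) i = 0) :
    0 ≤ star x ⬝ᵥ (A *ᵥ x) := by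
  rw [hA.star_dotProduct_mulVec_eq_sum]
  refine Finset.sum_nonneg fun i _ => ?_
  rcases lt_or_ge (hA.eigenvalues i) 0 with hi | hi
  · simp [hx i hi]
  · exact mul_nonneg (by exact_mod_cast hi) (star_mul_self_nonneg _)

lemma exists_ne_zero_star_dotProduct_submatrix_mulVec_nonneg (hA : A.IsHermitian) (f : m → n)
    (hm : negEig A < Fintype.card m) :
    ∃ y ≠ 0, 0 ≤ star y ⬝ᵥ (A.submatrix f f *ᵥ y) := by
  set E : Matrix n m ℂ := (1 : Matrix n n ℂ).submatrix id f
  set U : Matrix n n ℂ := (hA.eigenvectorUnitary : Matrix n n ℂ)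
  let L := LinearMap.funLeft ℂ ℂ (Subtype.val : {i // hA.eigenvalues i < 0} → n) ∘ₗ
    (star U * E).mulVecLin
  have hker : LinearMap.ker L ≠ ⊥ := LinearMap.ker_ne_bot_of_finrank_lt <| by
    simpa [negEig, hA, Nat.card_eq_fintype_card] using hm
  obtain ⟨y, hyL, hy⟩ := Submodule.exists_mem_ne_zero_of_ne_bot hker
  refine ⟨y, hy, ?_⟩
  have hsub : A.submatrix f f = Eᴴ * A * E := by
    ext s t; simp [E, mul_apply, one_apply]
  rw [hsub, ← mulVec_mulVec, ← mulVec_mulVec, dotProduct_mulVec, ← star_mulVec]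
  refine hA.star_dotProduct_mulVec_nonneg_of_coord_eq_zero _ fun i hi => ?_
  simpa [L, mulVec_mulVec] using congrFun hyL ⟨i, hi⟩

end Matrix.IsHermitian

lemma vecMul_submatrix_Tmat_rev (a : ℕ → ℂ) {k j : ℕ} (hkj : k ≤ j) (w : Fin k → ℂ) {m : ℕ}
    (hm : m < j) :
    (w ᵥ* (Tmat a j).submatrix (fun s => (Fin.castLE hkj s).rev) id) (Fin.rev ⟨m, hm⟩) =
      convCoeff a w m := by
  simp only [vecMul, dotProduct, convCoeff]
  refine Finset.sum_congr rfl fun s _ => ?_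
  have hs := s.isLt
  simp only [Tmat, submatrix_apply, of_apply, id, Fin.val_rev, Fin.val_castLE]
  congr 1
  by_cases hsm : (s : ℕ) ≤ m
  · rw [if_pos (by omega), if_pos hsm]; congr 1; omega
  · rw [if_neg (by omega), if_neg hsm]

lemma exists_ne_zero_norm_convCoeff_sq_le (a : ℕ → ℂ) {k j : ℕ} (hkj : k ≤ j)
    (hneg : negEig (1 - Tmat a j * (Tmat a j)ᴴ) < k) :
    ∃ w : Fin k → ℂ, w ≠ 0 ∧ ∀ m < j, ‖convCoeff a w m‖ ^ 2 ≤ ∑ s, ‖w s‖ ^ 2 := by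
  -- row `s` of `R` is row `j - 1 - s` of `T_j`
  set f : Fin k → Fin j := fun s => (Fin.castLE hkj s).rev
  set R := (Tmat a j).submatrix f id
  have hH : (1 - Tmat a j * (Tmat a j)ᴴ).IsHermitian :=
    isHermitian_one.sub (isHermitian_mul_conjTranspose_self _)
  obtain ⟨y, hy, hform⟩ := hH.exists_ne_zero_star_dotProduct_submatrix_mulVec_nonneg f
    (by simpa using hneg)
  have hf : Function.Injective f := Fin.rev_injective.comp (Fin.castLE_injective hkj)
  have hsub : (1 - Tmat a j * (Tmat a j)ᴴ).submatrix f f = 1 - R * Rᴴ := by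
    rw [submatrix_sub, Pi.sub_apply, Pi.sub_apply, submatrix_one _ hf,
      submatrix_mul _ _ _ id _ Function.bijective_id, conjTranspose_submatrix]
  have hRy : Rᴴ *ᵥ y = star (star y ᵥ* R) := by rw [star_vecMul, star_star]
  have hsum : ∑ q, ‖(star y ᵥ* R) q‖ ^ 2 ≤ ∑ s, ‖star y s‖ ^ 2 := by
    rw [hsub, sub_mulVec, one_mulVec, dotProduct_sub, ← mulVec_mulVec, dotProduct_mulVec, hRy,
      dotProduct_comm (star y ᵥ* R), sub_nonneg, star_dotProduct_self_eq_sum_norm_sq,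
      star_dotProduct_self_eq_sum_norm_sq, Complex.real_le_real] at hform
    simpa using hform
  refine ⟨star y, star_ne_zero.2 hy, fun m hm => ?_⟩
  rw [← vecMul_submatrix_Tmat_rev a hkj (star y) hm]
  exact (Finset.single_le_sum (f := fun q => ‖(star y ᵥ* R) q‖ ^ 2) (fun q _ => by positivity)
    (Finset.mem_univ _)).trans hsum

lemma convCoeff_smul (a : ℕ → ℂ) {k : ℕ} (c : ℝ) (w : Fin k → ℂ) (m : ℕ) :
    convCoeff a (c • w) m = c • convCoeff a w m := by
  simp [convCoeff, Finset.smul_sum, mul_assoc]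

lemma isClosed_setOf_norm_convCoeff_sq_le (a : ℕ → ℂ) (k m : ℕ) :
    IsClosed {w : Fin k → ℂ | ‖convCoeff a w m‖ ^ 2 ≤ ∑ s, ‖w s‖ ^ 2} :=
  isClosed_le (by unfold convCoeff; fun_prop) (by fun_prop)

lemma smul_mem_setOf_norm_convCoeff_sq_le (a : ℕ → ℂ) {k : ℕ} (m : ℕ) (c : ℝ)
    {w : Fin k → ℂ} (hw : ‖convCoeff a w m‖ ^ 2 ≤ ∑ s, ‖w s‖ ^ 2) :
    ‖convCoeff a (c • w) m‖ ^ 2 ≤ ∑ s, ‖(c • w) s‖ ^ 2 := by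
  simp only [convCoeff_smul, Pi.smul_apply, norm_smul, mul_pow, ← mul_sum]
  gcongr

lemma exists_ne_zero_forall_mem_of_smul_mem {E : Type*} [NormedAddCommGroup E] [NormedSpace ℝ E]
    [ProperSpace E] {P : ℕ → Set E} (hclosed : ∀ m, IsClosed (P m))
    (hsmul : ∀ m (c : ℝ), 0 < c → ∀ x ∈ P m, c • x ∈ P m)
    (h : ∀ᶠ j in Filter.atTop, ∃ x ≠ 0, ∀ m < j, x ∈ P m) :
    ∃ x ≠ 0, ∀ m, x ∈ P m := by
  set K : ℕ → Set E := fun j => Metric.sphere 0 1 ∩ ⋂ m, ⋂ (_ : m < j), P m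
  have hclosedK : ∀ j, IsClosed (K j) := fun j =>
    Metric.isClosed_sphere.inter (isClosed_biInter fun m _ => hclosed m)
  have hanti : ∀ j, K (j + 1) ⊆ K j := fun j =>
    Set.inter_subset_inter_right _ (Set.biInter_mono (fun _ hm => Nat.lt_succ_of_lt hm)
      fun _ _ => subset_rfl)
  have hnonempty : ∀ j, (K j).Nonempty := fun j => by
    obtain ⟨j', ⟨x, hx, hxP⟩, hjj'⟩ := (h.and (Filter.eventually_ge_atTop j)).exists
    refine ⟨‖x‖⁻¹ • x, by simp [norm_smul, hx], Set.mem_iInter₂.2 fun m hm =>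
      hsmul m _ (by positivity) x (hxP m (lt_of_lt_of_le hm hjj'))⟩
  obtain ⟨x, hx⟩ := IsCompact.nonempty_iInter_of_sequence_nonempty_isCompact_isClosed K hanti
    hnonempty ((isCompact_sphere 0 1).inter_right (isClosed_biInter fun m _ => hclosed m)) hclosedK
  rw [Set.mem_iInter] at hx
  exact ⟨x, ne_zero_of_mem_unit_sphere ⟨x, (hx 0).1⟩,
    fun m => Set.mem_iInter₂.1 (hx (m + 1)).2 m m.lt_succ_self⟩

lemma le_mul_one_add_pow_of_le_add_mul_sum {u : ℕ → ℝ} {C B : ℝ} (hB : 0 ≤ B)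
    (h : ∀ n, u n ≤ C + B * ∑ i ∈ range n, u i) (n : ℕ) : u n ≤ C * (1 + B) ^ n := by
  induction n using Nat.strong_induction_on with
  | _ n ih =>
    have hgeom := geom_sum_mul (1 + B) n
    rw [add_sub_cancel_left] at hgeom
    calc u n ≤ C + B * ∑ i ∈ range n, C * (1 + B) ^ i := by
          refine (h n).trans ?_
          gcongr with i hi
          exact ih i (mem_range.1 hi)
      _ = C * (1 + B) ^ n := by rw [← mul_sum]; linear_combination C * hgeom

lemma norm_mul_norm_le_of_norm_convCoeff_le (a : ℕ → ℂ) {k : ℕ} {w : Fin k → ℂ} {t : Fin k}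
    (ht : ∀ s < t, w s = 0) {C : ℝ} (hC : ∀ m, ‖convCoeff a w m‖ ≤ C) (n : ℕ) :
    ‖w t‖ * ‖a n‖ ≤ C + k * ‖w‖ * ∑ i ∈ range n, ‖a i‖ := by
  set S := ∑ i ∈ range n, ‖a i‖
  set g : Fin k → ℂ := fun s => w s * if (s : ℕ) ≤ n + t then a (n + t - s) else 0
  have hsplit : convCoeff a w (n + t) = w t * a n + ∑ s ∈ univ.erase t, g s := by
    rw [convCoeff, ← add_sum_erase _ _ (mem_univ t)]
    simp [g]
  have hterm : ∀ s ∈ univ.erase t, ‖g s‖ ≤ ‖w‖ * S := by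
    intro s hs
    rcases lt_or_gt_of_ne (ne_of_mem_erase hs) with hst | hst
    · simp only [g, ht s hst, zero_mul, norm_zero]
      positivity
    · have hst' : (t : ℕ) < s := hst
      simp only [g, norm_mul]
      split_ifs with hle
      · exact mul_le_mul (norm_le_pi_norm w s)
          (single_le_sum (fun i _ => norm_nonneg (a i)) (mem_range.2 (by omega)))
          (norm_nonneg _) (norm_nonneg _)
      · rw [norm_zero, mul_zero]
        positivity
  calc ‖w t‖ * ‖a n‖ = ‖convCoeff a w (n + t) - ∑ s ∈ univ.erase t, g s‖ := by
        rw [hsplit, add_sub_cancel_right, norm_mul]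
    _ ≤ ‖convCoeff a w (n + t)‖ + ∑ s ∈ univ.erase t, ‖g s‖ :=
        (norm_sub_le _ _).trans (add_le_add_right (norm_sum_le _ _) _)
    _ ≤ C + (univ.erase t).card • (‖w‖ * S) :=
        add_le_add (hC _) (sum_le_card_nsmul _ _ _ hterm)
    _ ≤ C + k * ‖w‖ * S := by
        rw [nsmul_eq_mul, mul_assoc]
        gcongr
        exact_mod_cast (card_erase_le).trans (by simp)

lemma exists_norm_le_mul_pow_of_norm_convCoeff_le (a : ℕ → ℂ) {k : ℕ} {w : Fin k → ℂ}
    (hw : w ≠ 0) {C : ℝ} (hC : ∀ m, ‖convCoeff a w m‖ ≤ C) :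
    ∃ A D : ℝ, 0 < D ∧ ∀ n, ‖a n‖ ≤ A * D ^ n := by
  obtain ⟨t, ht⟩ := exists_minimal_of_wellFoundedLT (fun s => w s ≠ 0) (Function.ne_iff.1 hw)
  have hmin : ∀ s < t, w s = 0 := fun s hs => not_not.1 (ht.not_prop_of_lt hs)
  have hε : 0 < ‖w t‖ := norm_pos_iff.2 ht.prop
  refine ⟨C / ‖w t‖, 1 + k * ‖w‖ / ‖w t‖, by positivity,
    le_mul_one_add_pow_of_le_add_mul_sum (by positivity) fun n => ?_⟩
  have := norm_mul_norm_le_of_norm_convCoeff_le a hmin hC n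
  rw [div_mul_eq_mul_div, ← add_div, le_div_iff₀ hε]
  linarith

lemma summable_mul_pow_of_norm_le_mul_pow {𝕜 : Type*} [NormedField 𝕜] [CompleteSpace 𝕜]
    {a : ℕ → 𝕜} {A D : ℝ} (hD : 0 ≤ D) (ha : ∀ n, ‖a n‖ ≤ A * D ^ n) {z : 𝕜}
    (hz : D * ‖z‖ < 1) :
    Summable fun n => a n * z ^ n := by
  refine Summable.of_norm_bounded ((summable_geometric_of_lt_one (by positivity) hz).mul_left A)
    fun n => ?_
  rw [norm_mul, norm_pow, mul_pow, ← mul_assoc]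
  gcongr
  exact ha n

/-- if the matrices `I_j − T_j T_j*` have exactly `κ` negative
eigenvalues for all sufficiently large `j`, then the power series
`Σ a_j z^j` converges in a disk `|z| < δ` for some `δ > 0`. -/
theorem powerSeries_converges_of_eventually_negEig_eq
    (a : ℕ → ℂ) (κ : ℕ)
    (h : ∃ N, ∀ j ≥ N, negEig (1 - Tmat a j * (Tmat a j)ᴴ) = κ) :
    ∃ δ : ℝ, 0 < δ ∧ ∀ z : ℂ, ‖z‖ < δ →
      ∃ L : ℂ, Filter.Tendsto (fun m => ∑ j ∈ Finset.range m, a j * z ^ j)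
        Filter.atTop (nhds L) := by
  obtain ⟨N, hN⟩ := h
  obtain ⟨w, hw, hwP⟩ := exists_ne_zero_forall_mem_of_smul_mem
    (isClosed_setOf_norm_convCoeff_sq_le a (κ + 1))
    (fun m c _ _ => smul_mem_setOf_norm_convCoeff_sq_le a m c) <|
    Filter.eventually_atTop.2 ⟨max N (κ + 1), fun j hj =>
      exists_ne_zero_norm_convCoeff_sq_le a (le_of_max_le_right hj)
        (by rw [hN j (le_of_max_le_left hj)]; omega)⟩
  obtain ⟨A, D, hD, ha⟩ := exists_norm_le_mul_pow_of_norm_convCoeff_le a hw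
    fun m => Real.le_sqrt_of_sq_le (hwP m)
  exact ⟨1 / D, one_div_pos.2 hD, fun z hz => ⟨_, (summable_mul_pow_of_norm_le_mul_pow hD.le ha
    ((lt_div_iff₀' hD).1 hz)).hasSum.tendsto_sum_nat⟩⟩
end

section
/- Let R > 0 and let C : ℕ × ℕ → ℂ satisfy C(n,m) = conj(C(m,n)) for all m, n, and assume that for every ρ with 0 < ρ < R the double series Σ_{m,n≥0} |C(m,n)| ρ^{m+n} converges. Define the Hermitian kernel K(w,z) = Σ_{m,n≥0} C(m,n) z^m conj(w)^n for complex w, z with |w| < R and |z| < R. Let κ be a nonnegative integer. Then K has exactly κ negative squares on the disk {z : |z| < R} if and only if for every r ≥ 0 the Hermitian (r+1)×(r+1) matrix (C(m,n))_{m,n=0}^r has at most κ negative eigenvalues, and it has exactly κ negative eigenvalues for all sufficiently large r. -/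
open scoped Matrix ComplexConjugate

/-!
Write `G(z)` for the kernel matrix at points `z₁, …, zₘ` and `Cₛ` for the coefficient matrix
`(C(p,q))_{p,q<s}`. The number of negative eigenvalues does not increase under a congruence
`A ↦ Bᴴ A B`, and it is lower semicontinuous on Hermitian matrices: the compression of `A` to its
negative eigenspace is negative definite, and stays so under small perturbations of `A`.

`G(z)` is the limit of the congruent matrices `Vₛᴴ Cₛ Vₛ`, `Vₛ = (conj(z_j)^p)_{p<s}`, so its
negative index is at most that of some `Cₛ`. Conversely, take the nodes `t·j` (`j < s`) and
`A_t = (Vᵀ)⁻¹ diag(t^{-β})` with `V` the Vandermonde matrix of `0, …, s-1`. Then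
`(A_tᴴ G A_t)_{αβ} = Σ C(p,q) conj(μ_α(p)) μ_β(q)` for moments `μ_β(q) = t^{q-β} μ_β(q)|_{t=1}`,
and `μ_β(q)|_{t=1} = δ_{qβ}` for `q < s`; by dominated convergence `A_tᴴ G A_t → Cₛ` as
`t → 0⁺`, so `Cₛ` is dominated by a kernel matrix. As `Cₛ` is a principal submatrix of `Cₛ₊₁`,
its negative index is monotone in `s`, so "at most `κ`, attained" is "eventually equal to `κ`".
-/

open Matrix Filter Topology

lemma Matrix.conjTranspose_mul_mul_apply {n m m' : Type*} [Fintype n] (X : Matrix n m ℂ)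
    (M : Matrix n n ℂ) (Y : Matrix n m' ℂ) (a : m) (b : m') :
    (Xᴴ * M * Y) a b = ∑ i, ∑ j, star (X i a) * M i j * Y j b := by
  simp only [mul_apply, conjTranspose_apply, Finset.sum_mul]
  exact Finset.sum_comm

section NegativeIndex

variable {n m ι : Type*} [Fintype n] [Fintype m] [Fintype ι]

def quadForm (A : Matrix n n ℂ) (x : n → ℂ) : ℝ :=
  (star x ⬝ᵥ A *ᵥ x).re

lemma quadForm_conjTranspose_mul_mul (A : Matrix n n ℂ) (B : Matrix n m ℂ) (x : m → ℂ) :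
    quadForm (Bᴴ * A * B) x = quadForm A (B *ᵥ x) := by
  rw [quadForm, quadForm, ← mulVec_mulVec, ← mulVec_mulVec, dotProduct_mulVec, ← star_mulVec]

lemma quadForm_add (A B : Matrix n n ℂ) (x : n → ℂ) :
    quadForm (A + B) x = quadForm A x + quadForm B x := by
  rw [quadForm, quadForm, quadForm, add_mulVec, dotProduct_add, Complex.add_re]

lemma quadForm_diagonal [DecidableEq n] (d : n → ℝ) (x : n → ℂ) :
    quadForm (diagonal fun i => (d i : ℂ)) x = ∑ i, d i * ‖x i‖ ^ 2 := by
  simp only [quadForm, dotProduct, mulVec_diagonal, Complex.re_sum, Pi.star_apply,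
    RCLike.star_def]
  refine Finset.sum_congr rfl fun i _ => ?_
  rw [mul_left_comm, Complex.conj_mul', ← Complex.ofReal_pow, Complex.re_ofReal_mul,
    Complex.ofReal_re]

lemma abs_quadForm_le (A : Matrix n n ℂ) (x : n → ℂ) :
    |quadForm A x| ≤ (∑ i, ∑ j, ‖A i j‖) * ∑ i, ‖x i‖ ^ 2 := by
  have hx : ∀ i, ‖x i‖ ^ 2 ≤ ∑ j, ‖x j‖ ^ 2 := fun i =>
    Finset.single_le_sum (fun j _ => sq_nonneg ‖x j‖) (Finset.mem_univ i)
  calc |quadForm A x| ≤ ‖star x ⬝ᵥ A *ᵥ x‖ := Complex.abs_re_le_norm _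
    _ ≤ ∑ i, ∑ j, ‖x i‖ * ‖A i j‖ * ‖x j‖ := by
        simp only [dotProduct, mulVec, Finset.mul_sum]
        refine (norm_sum_le _ _).trans (Finset.sum_le_sum fun i _ => ?_)
        refine (norm_sum_le _ _).trans (le_of_eq (Finset.sum_congr rfl fun j _ => ?_))
        simp [mul_assoc]
    _ ≤ ∑ i, ∑ j, ‖A i j‖ * ∑ k, ‖x k‖ ^ 2 := by
        refine Finset.sum_le_sum fun i _ => Finset.sum_le_sum fun j _ => ?_
        have hij : ‖x i‖ * ‖x j‖ ≤ ∑ k, ‖x k‖ ^ 2 := by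
          nlinarith [sq_nonneg (‖x i‖ - ‖x j‖), hx i, hx j]
        calc ‖x i‖ * ‖A i j‖ * ‖x j‖ = ‖A i j‖ * (‖x i‖ * ‖x j‖) := by ring
          _ ≤ _ := mul_le_mul_of_nonneg_left hij (norm_nonneg _)
    _ = (∑ i, ∑ j, ‖A i j‖) * ∑ i, ‖x i‖ ^ 2 := by simp only [Finset.sum_mul]

lemma sum_mul_sq_norm_neg {d : ι → ℝ} (hd : ∀ i, d i < 0) {c : ι → ℂ} (hc : c ≠ 0) :
    ∑ i, d i * ‖c i‖ ^ 2 < 0 := by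
  obtain ⟨i, hi⟩ := Function.ne_iff.mp hc
  refine Finset.sum_neg' (fun j _ => mul_nonpos_of_nonpos_of_nonneg (hd j).le (sq_nonneg _))
    ⟨i, Finset.mem_univ i, mul_neg_of_neg_of_pos (hd i) (pow_pos (norm_pos_iff.mpr hi) 2)⟩

lemma quadForm_eq_sum_eigenvalues [DecidableEq n] {A : Matrix n n ℂ} (hA : A.IsHermitian)
    (x : n → ℂ) :
    quadForm A x = ∑ i, hA.eigenvalues i *
      ‖(star (hA.eigenvectorUnitary : Matrix n n ℂ) *ᵥ x) i‖ ^ 2 := by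
  set U : Matrix n n ℂ := (hA.eigenvectorUnitary : Matrix n n ℂ)
  have hspec : A = (star U)ᴴ * diagonal (fun i => (hA.eigenvalues i : ℂ)) * star U := by
    conv_lhs => rw [hA.spectral_theorem]
    rw [← star_eq_conjTranspose, star_star]
    rfl
  conv_lhs => rw [hspec]
  rw [quadForm_conjTranspose_mul_mul, quadForm_diagonal]

lemma card_le_negEig_of_quadForm_neg [DecidableEq n] {A : Matrix n n ℂ} (hA : A.IsHermitian)
    (V : Matrix n ι ℂ) (hV : ∀ c, c ≠ 0 → quadForm A (V *ᵥ c) < 0) :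
    Fintype.card ι ≤ negEig A := by
  set S := {i // hA.eigenvalues i < 0}
  let L : (ι → ℂ) →ₗ[ℂ] (S → ℂ) :=
    LinearMap.funLeft ℂ ℂ Subtype.val ∘ₗ
      (star (hA.eigenvectorUnitary : Matrix n n ℂ) * V).mulVecLin
  have hL : Function.Injective L := by
    rw [← LinearMap.ker_eq_bot, LinearMap.ker_eq_bot']
    intro c hc
    by_contra hc0
    refine (hV c hc0).not_ge ?_
    rw [quadForm_eq_sum_eigenvalues hA, mulVec_mulVec]
    refine Finset.sum_nonneg fun i _ => ?_
    by_cases hi : hA.eigenvalues i < 0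
    · have : ((star (hA.eigenvectorUnitary : Matrix n n ℂ) * V) *ᵥ c) i = 0 :=
        congrFun hc ⟨i, hi⟩
      simp [this]
    · exact mul_nonneg (not_lt.mp hi) (sq_nonneg _)
  calc Fintype.card ι = Module.finrank ℂ (ι → ℂ) :=
        (Module.finrank_fintype_fun_eq_card ℂ).symm
    _ ≤ Module.finrank ℂ (S → ℂ) := LinearMap.finrank_le_finrank_of_injective hL
    _ = negEig A := by
      rw [Module.finrank_fintype_fun_eq_card, negEig, dif_pos hA, Nat.card_eq_fintype_card]

lemma exists_conjTranspose_mul_mul_eq_diagonal_neg [DecidableEq n] {A : Matrix n n ℂ}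
    (hA : A.IsHermitian) :
    ∃ (V : Matrix n (Fin (negEig A)) ℂ) (d : Fin (negEig A) → ℝ),
      (∀ i, d i < 0) ∧ Vᴴ * A * V = diagonal fun i => (d i : ℂ) := by
  set U : Matrix n n ℂ := (hA.eigenvectorUnitary : Matrix n n ℂ)
  have hcard : Fintype.card {i // hA.eigenvalues i < 0} = negEig A := by
    rw [negEig, dif_pos hA, Nat.card_eq_fintype_card]
  let e₀ := (Fintype.equivFinOfCardEq hcard).symm
  let e : Fin (negEig A) ↪ n := e₀.toEmbedding.trans (Function.Embedding.subtype _)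
  have hdiag : Uᴴ * A * U = diagonal fun i => (hA.eigenvalues i : ℂ) := by
    have := hA.conjStarAlgAut_star_eigenvectorUnitary
    rwa [Unitary.conjStarAlgAut_apply, Unitary.coe_star, star_star, star_eq_conjTranspose] at this
  refine ⟨U.submatrix id e, fun k => hA.eigenvalues (e k),
    fun k => (e₀ k).2, ?_⟩
  calc (U.submatrix id e)ᴴ * A * U.submatrix id e = (Uᴴ * A * U).submatrix e e := by
        rw [submatrix_mul _ _ _ id _ Function.bijective_id,
          submatrix_mul _ _ _ id _ Function.bijective_id, conjTranspose_submatrix, submatrix_id_id]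
    _ = _ := by rw [hdiag, submatrix_diagonal_embedding]; rfl

lemma negEig_conjTranspose_mul_mul_le [DecidableEq n] [DecidableEq m] {A : Matrix n n ℂ}
    (hA : A.IsHermitian) (B : Matrix n m ℂ) :
    negEig (Bᴴ * A * B) ≤ negEig A := by
  obtain ⟨V, d, hd, hV⟩ :=
    exists_conjTranspose_mul_mul_eq_diagonal_neg (isHermitian_conjTranspose_mul_mul B hA)
  simpa using card_le_negEig_of_quadForm_neg hA (B * V) fun c hc => by
    rw [← mulVec_mulVec, ← quadForm_conjTranspose_mul_mul, ← quadForm_conjTranspose_mul_mul,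
      hV, quadForm_diagonal]
    exact sum_mul_sq_norm_neg hd hc

lemma negEig_submatrix_le [DecidableEq n] [DecidableEq m] {A : Matrix n n ℂ}
    (hA : A.IsHermitian) (f : m → n) :
    negEig (A.submatrix f f) ≤ negEig A := by
  set B : Matrix n m ℂ := (1 : Matrix n n ℂ).submatrix id f
  have hB : A.submatrix f f = Bᴴ * A * B := by
    ext i j
    simp [B, conjTranspose_submatrix, mul_apply, one_apply]
  exact hB ▸ negEig_conjTranspose_mul_mul_le hA B

lemma eventually_negEig_le_of_tendsto [DecidableEq n] {α : Type*} {l : Filter α}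
    {A : α → Matrix n n ℂ} {A₀ : Matrix n n ℂ} (hA₀ : A₀.IsHermitian)
    (hA : ∀ᶠ t in l, (A t).IsHermitian) (hlim : Tendsto A l (𝓝 A₀)) :
    ∀ᶠ t in l, negEig A₀ ≤ negEig (A t) := by
  obtain ⟨V, d, hd, hV⟩ := exists_conjTranspose_mul_mul_eq_diagonal_neg hA₀
  set D : Matrix (Fin (negEig A₀)) (Fin (negEig A₀)) ℂ := diagonal fun i => (d i : ℂ)
  set ε : α → ℝ := fun t => ∑ i, ∑ j, ‖(Vᴴ * A t * V - D) i j‖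
  have hε : Tendsto ε l (𝓝 0) := by
    have hcont : Continuous fun M : Matrix n n ℂ => ∑ i, ∑ j, ‖(Vᴴ * M * V - D) i j‖ := by
      fun_prop
    have := (hcont.tendsto A₀).comp hlim
    simp only [hV, sub_self, Matrix.zero_apply, norm_zero, Finset.sum_const_zero] at this
    exact this
  have hsmall : ∀ᶠ t in l, ∀ i, ε t < -d i :=
    eventually_all.2 fun i => hε.eventually (gt_mem_nhds (neg_pos.2 (hd i)))
  filter_upwards [hA, hsmall] with t hAt hεt
  simpa using card_le_negEig_of_quadForm_neg hAt V fun c hc => by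
    have hsplit : Vᴴ * A t * V = D + (Vᴴ * A t * V - D) := (add_sub_cancel _ _).symm
    rw [← quadForm_conjTranspose_mul_mul, hsplit, quadForm_add, quadForm_diagonal]
    calc _ ≤ ∑ i, d i * ‖c i‖ ^ 2 + ε t * ∑ i, ‖c i‖ ^ 2 :=
          add_le_add_right ((le_abs_self _).trans (abs_quadForm_le _ _)) _
      _ = ∑ i, (d i + ε t) * ‖c i‖ ^ 2 := by
          rw [Finset.mul_sum, ← Finset.sum_add_distrib]
          simp only [add_mul]
      _ < 0 := sum_mul_sq_norm_neg (fun i => by linarith [hεt i]) hc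

end NegativeIndex

section Gram

variable {C : ℕ → ℕ → ℂ} {ι κ : Type*}

def coeffMat (C : ℕ → ℕ → ℂ) (s : ℕ) : Matrix (Fin s) (Fin s) ℂ :=
  Matrix.of fun p q => C p q

noncomputable def gram (C : ℕ → ℕ → ℂ) (z : ι → ℂ) : Matrix ι ι ℂ :=
  Matrix.of fun i j => ∑' p : ℕ × ℕ, C p.1 p.2 * z i ^ p.1 * conj (z j) ^ p.2

def powMat (z : ι → ℂ) (s : ℕ) : Matrix (Fin s) ι ℂ :=
  Matrix.of fun q j => conj (z j) ^ (q : ℕ)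

def moment [Fintype ι] (z : ι → ℂ) (X : Matrix ι κ ℂ) (β : κ) (q : ℕ) : ℂ :=
  ∑ j, conj (z j) ^ q * X j β

lemma coeffMat_isHermitian (hherm : ∀ m n, C n m = conj (C m n)) (s : ℕ) :
    (coeffMat C s).IsHermitian := by
  ext p q
  simp [coeffMat, hherm (p : ℕ) (q : ℕ)]

lemma monotone_negEig_coeffMat (hherm : ∀ m n, C n m = conj (C m n)) :
    Monotone fun s => negEig (coeffMat C s) := fun _ _ h =>
  negEig_submatrix_le (coeffMat_isHermitian hherm _) (Fin.castLE h)

lemma summable_gram_term {R : ℝ}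
    (hconv : ∀ ρ : ℝ, 0 < ρ → ρ < R →
      Summable fun p : ℕ × ℕ => ‖C p.1 p.2‖ * ρ ^ (p.1 + p.2))
    {z w : ℂ} (hz : ‖z‖ < R) (hw : ‖w‖ < R) :
    Summable fun p : ℕ × ℕ => C p.1 p.2 * z ^ p.1 * conj w ^ p.2 := by
  obtain ⟨ρ, hρ, hρR⟩ := exists_between (max_lt hz hw)
  have hρpos : 0 < ρ := (norm_nonneg z).trans_lt ((le_max_left _ _).trans_lt hρ)
  refine .of_norm_bounded (hconv ρ hρpos hρR) fun p => ?_
  rw [norm_mul, norm_mul, norm_pow, norm_pow, Complex.norm_conj, pow_add, mul_assoc]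
  gcongr
  · exact (le_max_left _ _).trans hρ.le
  · exact (le_max_right _ _).trans hρ.le

variable {z : ι → ℂ}

lemma tendsto_truncated_gram
    (hsum : ∀ i j, Summable fun p : ℕ × ℕ => C p.1 p.2 * z i ^ p.1 * conj (z j) ^ p.2) :
    Tendsto (fun s => (powMat z s)ᴴ * coeffMat C s * powMat z s) atTop (𝓝 (gram C z)) := by
  refine tendsto_pi_nhds.2 fun i => tendsto_pi_nhds.2 fun j => ?_
  have hsquares : Tendsto (fun s => Finset.range s ×ˢ Finset.range s) atTop atTop :=
    tendsto_atTop_finset_of_monotone (fun a b h => Finset.product_subset_product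
      (Finset.range_subset_range.2 h) (Finset.range_subset_range.2 h))
      fun p => ⟨max p.1 p.2 + 1, by simp⟩
  refine ((hsum i j).hasSum.comp hsquares).congr fun s => ?_
  simp only [Function.comp_apply, conjTranspose_mul_mul_apply, Finset.sum_product, powMat,
    coeffMat, of_apply, star_pow, RCLike.star_def, Complex.conj_conj]
  rw [Finset.sum_range fun p => ∑ q ∈ Finset.range s, _]
  refine Finset.sum_congr rfl fun p _ => ?_
  rw [Finset.sum_range]
  exact Finset.sum_congr rfl fun q _ => by ring

lemma gram_isHermitian (hherm : ∀ m n, C n m = conj (C m n))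
    (hsum : ∀ i j, Summable fun p : ℕ × ℕ => C p.1 p.2 * z i ^ p.1 * conj (z j) ^ p.2) :
    (gram C z).IsHermitian :=
  (isClosed_eq continuous_id.matrix_conjTranspose continuous_id).mem_of_tendsto
    (tendsto_truncated_gram hsum) (Eventually.of_forall fun s =>
      isHermitian_conjTranspose_mul_mul _ (coeffMat_isHermitian hherm s))

lemma eventually_negEig_gram_le [Fintype ι] [DecidableEq ι]
    (hherm : ∀ m n, C n m = conj (C m n))
    (hsum : ∀ i j, Summable fun p : ℕ × ℕ => C p.1 p.2 * z i ^ p.1 * conj (z j) ^ p.2) :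
    ∀ᶠ s in atTop, negEig (gram C z) ≤ negEig (coeffMat C s) := by
  filter_upwards [eventually_negEig_le_of_tendsto (gram_isHermitian hherm hsum)
    (Eventually.of_forall fun s => isHermitian_conjTranspose_mul_mul _
      (coeffMat_isHermitian hherm s)) (tendsto_truncated_gram hsum)] with s hs
  exact hs.trans (negEig_conjTranspose_mul_mul_le (coeffMat_isHermitian hherm s) _)

lemma conjTranspose_mul_gram_mul_apply [Fintype ι]
    (hsum : ∀ i j, Summable fun p : ℕ × ℕ => C p.1 p.2 * z i ^ p.1 * conj (z j) ^ p.2)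
    (X : Matrix ι κ ℂ) (α β : κ) :
    (Xᴴ * gram C z * X) α β =
      ∑' p : ℕ × ℕ, C p.1 p.2 * conj (moment z X α p.1) * moment z X β p.2 := by
  have hterm : ∀ p : ℕ × ℕ, C p.1 p.2 * conj (moment z X α p.1) * moment z X β p.2 =
      ∑ i, ∑ j, star (X i α) * (C p.1 p.2 * z i ^ p.1 * conj (z j) ^ p.2) * X j β := by
    intro p
    simp only [moment, map_sum, map_mul, map_pow, Complex.conj_conj, Finset.mul_sum,
      Finset.sum_mul]
    rw [Finset.sum_comm]
    exact Finset.sum_congr rfl fun i _ => Finset.sum_congr rfl fun j _ => by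
      rw [RCLike.star_def]; ring
  have hsum' : ∀ i j, Summable fun p : ℕ × ℕ =>
      star (X i α) * (C p.1 p.2 * z i ^ p.1 * conj (z j) ^ p.2) * X j β :=
    fun i j => ((hsum i j).mul_left _).mul_right _
  rw [tsum_congr hterm, Summable.tsum_finsetSum fun i _ => summable_sum fun j _ => hsum' i j,
    conjTranspose_mul_mul_apply]
  refine Finset.sum_congr rfl fun i _ => ?_
  rw [Summable.tsum_finsetSum fun j _ => hsum' i j]
  refine Finset.sum_congr rfl fun j _ => ?_
  rw [tsum_mul_right, tsum_mul_left]
  rfl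

end Gram

section Scaling

variable {R : ℝ} {C : ℕ → ℕ → ℂ} {s : ℕ}

def nodes (s : ℕ) : Fin s → ℂ := fun j => (j : ℕ)

def scaledNodes (s : ℕ) (t : ℝ) : Fin s → ℂ := fun j => t * nodes s j

noncomputable def nodeDual (s : ℕ) : Matrix (Fin s) (Fin s) ℂ :=
  (vandermonde (nodes s))ᵀ⁻¹

noncomputable def scaling (s : ℕ) (t : ℝ) : Matrix (Fin s) (Fin s) ℂ :=
  nodeDual s * diagonal fun β : Fin s => (t : ℂ)⁻¹ ^ (β : ℕ)

lemma moment_nodes_of_lt (β : Fin s) {q : ℕ} (hq : q < s) :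
    moment (nodes s) (nodeDual s) β q = if q = β then 1 else 0 := by
  have hdet : IsUnit (vandermonde (nodes s))ᵀ.det := by
    rw [det_transpose, isUnit_iff_ne_zero, det_vandermonde_ne_zero_iff]
    exact fun i j h => Fin.ext (by simpa [nodes] using h)
  have := congrFun₂ (mul_nonsing_inv _ hdet) ⟨q, hq⟩ β
  simp only [mul_apply, one_apply, Fin.ext_iff, transpose_apply, vandermonde_apply] at this
  rw [moment, ← this]
  exact Finset.sum_congr rfl fun j _ => by simp [nodes, nodeDual]

lemma moment_scaling (β : Fin s) (q : ℕ) (t : ℝ) :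
    moment (scaledNodes s t) (scaling s t) β q =
      (t : ℂ) ^ q * (t : ℂ)⁻¹ ^ (β : ℕ) * moment (nodes s) (nodeDual s) β q := by
  simp only [moment, scaling, scaledNodes, mul_diagonal, Finset.mul_sum, map_mul,
    Complex.conj_ofReal, nodes, map_natCast]
  exact Finset.sum_congr rfl fun j _ => by ring

lemma moment_scaling_of_le (β : Fin s) {q : ℕ} (hq : (β : ℕ) ≤ q) {t : ℝ} (ht : t ≠ 0) :
    moment (scaledNodes s t) (scaling s t) β q =
      (t : ℂ) ^ (q - β) * moment (nodes s) (nodeDual s) β q := by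
  rw [moment_scaling, inv_pow, ← pow_sub₀ _ (by exact_mod_cast ht) hq]

lemma moment_scaling_of_lt (β : Fin s) {q : ℕ} (hq : q < β) (t : ℝ) :
    moment (scaledNodes s t) (scaling s t) β q = 0 := by
  rw [moment_scaling, moment_nodes_of_lt β (hq.trans β.isLt), if_neg hq.ne, mul_zero]

lemma tendsto_moment_scaling (β : Fin s) (q : ℕ) :
    Tendsto (fun t => moment (scaledNodes s t) (scaling s t) β q) (𝓝[>] 0)
      (𝓝 (if q = β then 1 else 0)) := by
  rcases lt_or_ge q β with hq | hq
  · simp only [moment_scaling_of_lt β hq, if_neg hq.ne, tendsto_const_nhds]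
  have hlim : Tendsto (fun t : ℝ => (t : ℂ) ^ (q - β) * moment (nodes s) (nodeDual s) β q)
      (𝓝[>] 0) (𝓝 ((0 : ℂ) ^ (q - β) * moment (nodes s) (nodeDual s) β q)) :=
    ((Complex.continuous_ofReal.pow _).mul continuous_const).tendsto' 0 _
      (by simp) |>.mono_left nhdsWithin_le_nhds
  have hval : (0 : ℂ) ^ (q - β) * moment (nodes s) (nodeDual s) β q =
      if q = β then 1 else 0 := by
    rcases hq.eq_or_lt with h | h
    · subst h
      simp [moment_nodes_of_lt β β.isLt]
    · rw [zero_pow (by omega), zero_mul, if_neg h.ne']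
  rw [← hval]
  exact hlim.congr' (eventually_nhdsWithin_of_forall fun t ht =>
    (moment_scaling_of_le β hq (ne_of_gt ht)).symm)

lemma exists_norm_moment_scaling_le (β : Fin s) {t₀ : ℝ} (ht₀ : 0 < t₀) :
    ∃ M, ∀ t, 0 < t → t ≤ t₀ → ∀ q,
      ‖moment (scaledNodes s t) (scaling s t) β q‖ ≤ M * (t₀ * s) ^ q := by
  refine ⟨(∑ j, ‖nodeDual s j β‖) / t₀ ^ (β : ℕ), fun t ht htt₀ q => ?_⟩
  have hM : 0 ≤ (∑ j, ‖nodeDual s j β‖) / t₀ ^ (β : ℕ) := by positivity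
  rcases lt_or_ge q β with hq | hq
  · rw [moment_scaling_of_lt β hq, norm_zero]
    positivity
  have hnodes : ‖moment (nodes s) (nodeDual s) β q‖ ≤ s ^ q * ∑ j, ‖nodeDual s j β‖ := by
    refine (norm_sum_le _ _).trans ?_
    rw [Finset.mul_sum]
    refine Finset.sum_le_sum fun j _ => ?_
    rw [norm_mul, norm_pow, Complex.norm_conj, nodes, Complex.norm_natCast]
    gcongr
    exact_mod_cast j.isLt.le
  rw [moment_scaling_of_le β hq ht.ne', norm_mul, norm_pow, Complex.norm_real,
    Real.norm_of_nonneg ht.le]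
  calc t ^ (q - β) * ‖moment (nodes s) (nodeDual s) β q‖
      ≤ t₀ ^ (q - β) * (s ^ q * ∑ j, ‖nodeDual s j β‖) := by gcongr
    _ = (∑ j, ‖nodeDual s j β‖) / t₀ ^ (β : ℕ) * (t₀ * s) ^ q := by
      rw [pow_sub₀ _ ht₀.ne' hq, mul_pow]
      ring

lemma norm_scaledNodes_le {t : ℝ} (ht : 0 ≤ t) (j : Fin s) : ‖scaledNodes s t j‖ ≤ t * s := by
  rw [scaledNodes, nodes, norm_mul, Complex.norm_real, Real.norm_of_nonneg ht,
    Complex.norm_natCast]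
  gcongr
  exact_mod_cast j.isLt.le

lemma eventually_norm_scaledNodes_lt (hR : 0 < R) :
    ∀ᶠ t in 𝓝[>] 0, ∀ j : Fin s, ‖scaledNodes s t j‖ < R := by
  have hlim : Tendsto (fun t : ℝ => t * s) (𝓝[>] 0) (𝓝 0) :=
    ((continuous_mul_const _).tendsto' 0 0 (zero_mul _)).mono_left nhdsWithin_le_nhds
  filter_upwards [self_mem_nhdsWithin, hlim.eventually (gt_mem_nhds hR)] with t ht hts j
  exact (norm_scaledNodes_le (le_of_lt ht) j).trans_lt hts

lemma tsum_mul_conj_ite_mul_ite (C : ℕ → ℕ → ℂ) (a b : ℕ) :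
    ∑' p : ℕ × ℕ, C p.1 p.2 * conj (if p.1 = a then 1 else 0) * (if p.2 = b then 1 else 0) =
      C a b := by
  rw [tsum_eq_single (a, b) fun p hp => ?_]
  · simp
  · by_cases h : p.1 = a
    · simp [h, show p.2 ≠ b from fun h' => hp (Prod.ext h h')]
    · simp [h]

lemma tendsto_tsum_moment_scaling (hR : 0 < R)
    (hconv : ∀ ρ : ℝ, 0 < ρ → ρ < R →
      Summable fun p : ℕ × ℕ => ‖C p.1 p.2‖ * ρ ^ (p.1 + p.2)) (α β : Fin s) :
    Tendsto (fun t => ∑' p : ℕ × ℕ, C p.1 p.2 *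
        conj (moment (scaledNodes s t) (scaling s t) α p.1) *
        moment (scaledNodes s t) (scaling s t) β p.2) (𝓝[>] 0) (𝓝 (C α β)) := by
  set t₀ := R / (s + 1)
  have ht₀ : 0 < t₀ := by positivity
  have hρ : 0 < t₀ * s := mul_pos ht₀ (by exact_mod_cast α.pos)
  have hρR : t₀ * s < R := by
    rw [div_mul_eq_mul_div, div_lt_iff₀ (by positivity)]
    nlinarith
  obtain ⟨Mα, hMα⟩ := exists_norm_moment_scaling_le α ht₀
  obtain ⟨Mβ, hMβ⟩ := exists_norm_moment_scaling_le β ht₀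
  rw [← tsum_mul_conj_ite_mul_ite C α β]
  refine tendsto_tsum_of_dominated_convergence
    (bound := fun p => Mα * Mβ * (‖C p.1 p.2‖ * (t₀ * s) ^ (p.1 + p.2)))
    ((hconv _ hρ hρR).mul_left _)
    (fun p => (tendsto_const_nhds.mul ((Complex.continuous_conj.tendsto _).comp
      (tendsto_moment_scaling α p.1))).mul (tendsto_moment_scaling β p.2)) ?_
  filter_upwards [Ioc_mem_nhdsGT ht₀] with t ⟨ht, htt₀⟩ p
  rw [norm_mul, norm_mul, Complex.norm_conj, pow_add]
  have hα := hMα t ht htt₀ p.1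
  calc _ ≤ ‖C p.1 p.2‖ * (Mα * (t₀ * s) ^ p.1) * (Mβ * (t₀ * s) ^ p.2) :=
        mul_le_mul (mul_le_mul_of_nonneg_left hα (norm_nonneg _)) (hMβ t ht htt₀ p.2)
          (norm_nonneg _) (mul_nonneg (norm_nonneg _) ((norm_nonneg _).trans hα))
    _ = _ := by ring

lemma tendsto_scaling_gram (hR : 0 < R)
    (hconv : ∀ ρ : ℝ, 0 < ρ → ρ < R →
      Summable fun p : ℕ × ℕ => ‖C p.1 p.2‖ * ρ ^ (p.1 + p.2)) :
    Tendsto (fun t => (scaling s t)ᴴ * gram C (scaledNodes s t) * scaling s t) (𝓝[>] 0)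
      (𝓝 (coeffMat C s)) := by
  refine tendsto_pi_nhds.2 fun α => tendsto_pi_nhds.2 fun β =>
    (tendsto_tsum_moment_scaling hR hconv α β).congr' ?_
  filter_upwards [eventually_norm_scaledNodes_lt hR] with t hdisk
  exact (conjTranspose_mul_gram_mul_apply (fun i j => summable_gram_term hconv
    (hdisk i) (hdisk j)) _ α β).symm

lemma exists_negEig_coeffMat_le_negEig_gram (hR : 0 < R)
    (hherm : ∀ m n, C n m = conj (C m n))
    (hconv : ∀ ρ : ℝ, 0 < ρ → ρ < R →
      Summable fun p : ℕ × ℕ => ‖C p.1 p.2‖ * ρ ^ (p.1 + p.2)) (s : ℕ) :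
    ∃ z : Fin s → ℂ, (∀ i, ‖z i‖ < R) ∧ negEig (coeffMat C s) ≤ negEig (gram C z) := by
  have hgram : ∀ z : Fin s → ℂ, (∀ i, ‖z i‖ < R) → (gram C z).IsHermitian := fun z hz =>
    gram_isHermitian hherm fun i j => summable_gram_term hconv (hz i) (hz j)
  have hdisk := eventually_norm_scaledNodes_lt (s := s) hR
  have hlsc := eventually_negEig_le_of_tendsto (coeffMat_isHermitian hherm s)
    (hdisk.mono fun t ht => isHermitian_conjTranspose_mul_mul _ (hgram _ ht))
    (tendsto_scaling_gram hR hconv)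
  obtain ⟨t, ht, hle⟩ := (hdisk.and hlsc).exists
  exact ⟨scaledNodes s t, ht, hle.trans (negEig_conjTranspose_mul_mul_le (hgram _ ht) _)⟩

end Scaling

lemma hasNegSquares_iff_of_cofinal {Ω : Set ℂ} {K : ℂ → ℂ → ℂ} (f : ℕ → ℕ)
    (hle : ∀ m (z : Fin m → ℂ), (∀ i, z i ∈ Ω) →
      ∃ s, negEig (Matrix.of fun i j => K (z j) (z i)) ≤ f s)
    (hge : ∀ s, ∃ m, ∃ z : Fin m → ℂ, (∀ i, z i ∈ Ω) ∧
      f s ≤ negEig (Matrix.of fun i j => K (z j) (z i)))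
    (κ : ℕ) :
    HasNegSquares Ω K κ ↔ (∀ s, f s ≤ κ) ∧ ∃ s, f s = κ := by
  constructor
  · rintro ⟨hbound, m, z, hz, hκ⟩
    have hf : ∀ s, f s ≤ κ := fun s => by
      obtain ⟨m', z', hz', hs⟩ := hge s
      exact hs.trans (hbound m' z' hz')
    obtain ⟨s, hs⟩ := hle m z hz
    exact ⟨hf, s, le_antisymm (hf s) (hκ ▸ hs)⟩
  · rintro ⟨hf, s, hκ⟩
    have hbound : ∀ m (z : Fin m → ℂ), (∀ i, z i ∈ Ω) →
        negEig (Matrix.of fun i j => K (z j) (z i)) ≤ κ := fun m z hz => by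
      obtain ⟨s', hs⟩ := hle m z hz
      exact hs.trans (hf s')
    obtain ⟨m, z, hz, hs⟩ := hge s
    exact ⟨hbound, m, z, hz, le_antisymm (hbound m z hz) (hκ ▸ hs)⟩

lemma Monotone.forall_le_and_exists_eq_iff {f : ℕ → ℕ} (hf : Monotone f) (κ : ℕ) :
    ((∀ s, f s ≤ κ) ∧ ∃ s, f s = κ) ↔
      ((∀ r, f (r + 1) ≤ κ) ∧ ∃ N, ∀ r ≥ N, f (r + 1) = κ) := by
  constructor
  · rintro ⟨hbound, s, hs⟩
    exact ⟨fun r => hbound (r + 1), s, fun r hr =>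
      le_antisymm (hbound _) (hs ▸ hf (by omega))⟩
  · rintro ⟨hbound, N, hN⟩
    exact ⟨fun s => (hf s.le_succ).trans (hbound s), N + 1, hN N le_rfl⟩

/-- a holomorphic Hermitian kernel
`K(w,z) = Σ C(m,n) z^m conj(w)^n` on the disk of radius `R` has exactly `κ`
negative squares iff every coefficient matrix `(C(m,n))_{m,n=0}^r` has at most
`κ` negative eigenvalues, with equality for all sufficiently large `r`. -/
theorem holomorphic_kernel_negSquares_iff_coefficient_matrices
    (R : ℝ) (hR : 0 < R) (C : ℕ → ℕ → ℂ)
    (hherm : ∀ m n, C n m = conj (C m n))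
    (hconv : ∀ ρ : ℝ, 0 < ρ → ρ < R →
      Summable fun p : ℕ × ℕ => ‖C p.1 p.2‖ * ρ ^ (p.1 + p.2))
    (K : ℂ → ℂ → ℂ)
    (hK : ∀ w z : ℂ, ‖w‖ < R → ‖z‖ < R →
      K w z = ∑' p : ℕ × ℕ, C p.1 p.2 * z ^ p.1 * (conj w) ^ p.2)
    (κ : ℕ) :
    HasNegSquares {z : ℂ | ‖z‖ < R} K κ ↔
      ((∀ r : ℕ,
          negEig (Matrix.of fun i j : Fin (r + 1) => C (i : ℕ) (j : ℕ)) ≤ κ) ∧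
        ∃ N, ∀ r ≥ N,
          negEig (Matrix.of fun i j : Fin (r + 1) => C (i : ℕ) (j : ℕ)) = κ) := by
  have hkernel : ∀ m (z : Fin m → ℂ), (∀ i, ‖z i‖ < R) →
      (Matrix.of fun i j => K (z j) (z i)) = gram C z := fun m z hz => by
    ext i j
    exact hK _ _ (hz j) (hz i)
  refine (hasNegSquares_iff_of_cofinal (fun s => negEig (coeffMat C s)) (fun m z hz => ?_)
    (fun s => ?_) κ).trans ((monotone_negEig_coeffMat hherm).forall_le_and_exists_eq_iff κ)
  · rw [hkernel m z hz]
    exact (eventually_negEig_gram_le hherm fun i j =>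
      summable_gram_term hconv (hz i) (hz j)).exists
  · obtain ⟨z, hz, hle⟩ := exists_negEig_coeffMat_le_negEig_gram hR hherm hconv s
    exact ⟨s, z, hz, by rwa [hkernel s z hz]⟩
end
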